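/- Let (A,[·,·],∘,α) be a super Hom-Gel'fand-Dorfman bialgebra and let f_λ be a 2-cocycle on the associated quadratic Hom-Lie conformal superalgebra whose restriction to A × A has the form f_λ(u,v) = Σ_{i=0}^{n} λ^i f_i(u,v) with bilinear maps f_i: A × A → ℂ, f_n ≠ 0, and n ≤ 3. Then for all homogeneous u,v,w ∈ A: (i) f₂([v,u], α(w)) + (−1)^{|u||v|} f₁(u∘v, α(w)) = f₂(α(u), [w,v]) + f₁(α(u), w∘v); (ii) f₁(α(u), w∘v + (−1)^{|v||w|} v∘w) − (−1)^{|u||v|} f₁(α(v), w∘u + (−1)^{|u||w|} u∘w) = 2f₂([v,u], α(w)) − f₁(v∘u, α(w)) + (−1)^{|u||v|} f₁(u∘v, α(w)); (iii) f₁(α(u), [w,v]) + f₀(α(u), w∘v) − (−1)^{|u||v|} f₀(α(v), w∘u + (−1)^{|u||w|} u∘w) = f₁([v,u], α(w)) + (−1)^{|u||v|} f₀(u∘v, α(w)); (iv) f₀(α(u), [w,v]) − (−1)^{|u||v|} f₀(α(v), [w,u]) = f₀([v,u], α(w)). -/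

import Mathlib

noncomputable section

/-- The sign `(-1)^{|x||y|}` attached to parities `i, j` in `ℤ₂`. -/
def sg (i j : ZMod 2) : ℂ := (-1 : ℂ) ^ (i.val * j.val)

variable {A : Type*} [AddCommGroup A] [Module ℂ A]

/-- `gr` makes `A` into a superspace: `A = A₀ ⊕ A₁`. -/
def IsSupergrading (gr : ZMod 2 → Submodule ℂ A) : Prop :=
  (∀ x : A, ∃ x0 ∈ gr 0, ∃ x1 ∈ gr 1, x = x0 + x1) ∧ (gr 0 ⊓ gr 1 = ⊥)

/-- An even linear map: it preserves the grading. -/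
def EvenLin (gr : ZMod 2 → Submodule ℂ A) (α : A →ₗ[ℂ] A) : Prop :=
  ∀ i : ZMod 2, ∀ x ∈ gr i, α x ∈ gr i

/-- An even bilinear map: it adds parities. -/
def EvenBilin (gr : ZMod 2 → Submodule ℂ A) (m : A →ₗ[ℂ] A →ₗ[ℂ] A) : Prop :=
  ∀ i j : ZMod 2, ∀ x ∈ gr i, ∀ y ∈ gr j, m x y ∈ gr (i + j)

/-- A Hom-Lie superalgebra structure on the superspace `(A, gr)`. -/
def HomLieSuper (gr : ZMod 2 → Submodule ℂ A) (br : A →ₗ[ℂ] A →ₗ[ℂ] A)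
    (α : A →ₗ[ℂ] A) : Prop :=
  EvenLin gr α ∧ EvenBilin gr br ∧
  (∀ (i j : ZMod 2), ∀ x ∈ gr i, ∀ y ∈ gr j, br x y = -(sg i j • br y x)) ∧
  (∀ (i j k : ZMod 2), ∀ x ∈ gr i, ∀ y ∈ gr j, ∀ z ∈ gr k,
    sg i k • br (br x y) (α z) + sg i j • br (br y z) (α x)
      + sg j k • br (br z x) (α y) = 0)

/-- A Hom-Novikov superalgebra structure on the superspace `(A, gr)`. -/
def HomNovikovSuper (gr : ZMod 2 → Submodule ℂ A) (c : A →ₗ[ℂ] A →ₗ[ℂ] A)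
    (α : A →ₗ[ℂ] A) : Prop :=
  EvenLin gr α ∧ EvenBilin gr c ∧
  (∀ (i j k : ZMod 2), ∀ x ∈ gr i, ∀ y ∈ gr j, ∀ z ∈ gr k,
    c (c x y) (α z) - c (α x) (c y z) = sg i j • (c (c y x) (α z) - c (α y) (c x z))) ∧
  (∀ (i j k : ZMod 2), ∀ x ∈ gr i, ∀ y ∈ gr j, ∀ z ∈ gr k,
    c (c x y) (α z) = sg j k • c (c x z) (α y))

/-- A super Hom-Gel'fand-Dorfman bialgebra structure on the superspace `(A, gr)`. -/
def SuperHomGD (gr : ZMod 2 → Submodule ℂ A) (br c : A →ₗ[ℂ] A →ₗ[ℂ] A)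
    (α : A →ₗ[ℂ] A) : Prop :=
  HomLieSuper gr br α ∧ HomNovikovSuper gr c α ∧
  (∀ (i j k : ZMod 2), ∀ x ∈ gr i, ∀ y ∈ gr j, ∀ z ∈ gr k,
    br (c x y) (α z) - sg j k • br (c x z) (α y) + c (br x y) (α z)
      - sg j k • c (br x z) (α y) - c (α x) (br y z) = 0)

/-- A Lie superalgebra structure on the superspace `(A, gr)`. -/
def LieSuper (gr : ZMod 2 → Submodule ℂ A) (br : A →ₗ[ℂ] A →ₗ[ℂ] A) : Prop :=
  EvenBilin gr br ∧
  (∀ (i j : ZMod 2), ∀ x ∈ gr i, ∀ y ∈ gr j, br x y = -(sg i j • br y x)) ∧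
  (∀ (i j k : ZMod 2), ∀ x ∈ gr i, ∀ y ∈ gr j, ∀ z ∈ gr k,
    sg i k • br (br x y) z + sg i j • br (br y z) x + sg j k • br (br z x) y = 0)

/-- A Novikov superalgebra structure on the superspace `(A, gr)`. -/
def NovikovSuper (gr : ZMod 2 → Submodule ℂ A) (c : A →ₗ[ℂ] A →ₗ[ℂ] A) : Prop :=
  EvenBilin gr c ∧
  (∀ (i j k : ZMod 2), ∀ x ∈ gr i, ∀ y ∈ gr j, ∀ z ∈ gr k,
    c (c x y) z - c x (c y z) = sg i j • (c (c y x) z - c y (c x z))) ∧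
  (∀ (i j k : ZMod 2), ∀ x ∈ gr i, ∀ y ∈ gr j, ∀ z ∈ gr k,
    c (c x y) z = sg j k • c (c x z) y)

/-- A super Gel'fand-Dorfman bialgebra structure on the superspace `(A, gr)`. -/
def SuperGD (gr : ZMod 2 → Submodule ℂ A) (br c : A →ₗ[ℂ] A →ₗ[ℂ] A) : Prop :=
  LieSuper gr br ∧ NovikovSuper gr c ∧
  (∀ (i j k : ZMod 2), ∀ x ∈ gr i, ∀ y ∈ gr j, ∀ z ∈ gr k,
    br (c x y) z - sg j k • br (c x z) y + c (br x y) z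
      - sg j k • c (br x z) y - c x (br y z) = 0)


/-- The grading induced on `σ →₀ A` by a grading of `A` (coefficientwise). -/
def grFinsupp {A : Type*} [AddCommGroup A] [Module ℂ A] (σ : Type*)
    (gr : ZMod 2 → Submodule ℂ A) (i : ZMod 2) : Submodule ℂ (σ →₀ A) where
  carrier := {f | ∀ s : σ, f s ∈ gr i}
  add_mem' := by
    intro f g hf hg s
    rw [Finsupp.add_apply]
    exact add_mem (hf s) (hg s)
  zero_mem' := by
    intro s
    rw [Finsupp.zero_apply]
    exact zero_mem _
  smul_mem' := by
    intro t f hf s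
    rw [Finsupp.smul_apply]
    exact Submodule.smul_mem _ t (hf s)

section Conformal

variable {M : Type*} [AddCommGroup M] [Module ℂ M]

/-- Multiplication by `λ` on `ℂ[λ] ⊗ M`, encoded as `ℕ →₀ M`. -/
def lmulV : (ℕ →₀ M) →ₗ[ℂ] (ℕ →₀ M) := Finsupp.lmapDomain M ℂ (· + 1)

/-- Coefficientwise action of `∂` on `ℂ[λ] ⊗ M`. -/
def dVmap (dM : M →ₗ[ℂ] M) : (ℕ →₀ M) →ₗ[ℂ] (ℕ →₀ M) :=
  Finsupp.mapRange.linearMap dM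

/-- The substitution `λ ↦ −λ−∂` on `ℂ[λ] ⊗ M`:
`λⁿ r ↦ (−λ−∂)ⁿ r = (−1)ⁿ ∑ₖ C(n,k) λᵏ ∂^{n−k} r`. -/
def negSubst (dM : M →ₗ[ℂ] M) (p : ℕ →₀ M) : ℕ →₀ M :=
  p.sum fun n r => ((-1 : ℂ) ^ n) •
    ∑ k ∈ Finset.range (n + 1),
      (n.choose k : ℂ) • Finsupp.single k ((⇑dM)^[n - k] r)

/-- A Hom-Lie conformal superalgebra structure on the `ℂ[∂]`-module `M` (with `∂`
acting via `dM`), graded by `grM`, with λ-bracket `B : M → M → ℂ[λ] ⊗ M` (values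
encoded as `ℕ →₀ M`, the `n`-th coefficient being that of `λⁿ`) and twisting map `αM`.
The Hom-Jacobi identity is stated in `ℂ[λ,μ] ⊗ M`, encoded as `(ℕ × ℕ) →₀ M`, the
`(n,m)` coefficient being that of `λⁿ μᵐ`. -/
def HomLieConformalSuper (grM : ZMod 2 → Submodule ℂ M) (dM : M →ₗ[ℂ] M)
    (B : M →ₗ[ℂ] M →ₗ[ℂ] (ℕ →₀ M)) (αM : M →ₗ[ℂ] M) : Prop :=
  -- `α∂ = ∂α`
  (∀ x : M, αM (dM x) = dM (αM x)) ∧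
  -- `αM` is even
  (∀ i : ZMod 2, ∀ x ∈ grM i, αM x ∈ grM i) ∧
  -- the bracket is even
  (∀ (i j : ZMod 2), ∀ x ∈ grM i, ∀ y ∈ grM j, ∀ n : ℕ, B x y n ∈ grM (i + j)) ∧
  -- conformal sesquilinearity
  (∀ x y : M, B (dM x) y = -(lmulV (B x y))) ∧
  (∀ x y : M, B x (dM y) = dVmap dM (B x y) + lmulV (B x y)) ∧
  -- skew-symmetry `[x_λ y] = −(−1)^{|x||y|}[y_{−λ−∂} x]`
  (∀ (i j : ZMod 2), ∀ x ∈ grM i, ∀ y ∈ grM j,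
    B x y = -(sg i j • negSubst dM (B y x))) ∧
  -- Hom-Jacobi identity
  (∀ (i j k : ZMod 2), ∀ x ∈ grM i, ∀ y ∈ grM j, ∀ z ∈ grM k,
    ((B y z).sum fun m r => (B (αM x) r).sum fun n s =>
        Finsupp.single ((n, m) : ℕ × ℕ) s)
    = ((B x y).sum fun n r => (B r (αM z)).sum fun m s =>
        ∑ t ∈ Finset.range (m + 1),
          (m.choose t : ℂ) • Finsupp.single ((n + t, m - t) : ℕ × ℕ) s)
      + sg i j • ((B x z).sum fun n r => (B (αM y) r).sum fun m s =>
          Finsupp.single ((n, m) : ℕ × ℕ) s))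

end Conformal

/-- The action of `∂` on `R = ℂ[∂] ⊗ A`, encoded as `ℕ →₀ A`. -/
def dR {A : Type*} [AddCommGroup A] [Module ℂ A] : (ℕ →₀ A) →ₗ[ℂ] (ℕ →₀ A) :=
  Finsupp.lmapDomain A ℂ (· + 1)

/-- The λ-bracket `[u_λ v] = [v,u] + (∂+λ)(v∘u) + (−1)^{|u||v|} λ (u∘v)` on
generators `u, v ∈ A` of parities with sign `s = (−1)^{|u||v|}`. -/
def genBr {A : Type*} [AddCommGroup A] [Module ℂ A]
    (br c : A →ₗ[ℂ] A →ₗ[ℂ] A) (s : ℂ) (u v : A) : ℕ →₀ (ℕ →₀ A) :=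
  Finsupp.single 0 (Finsupp.single 0 (br v u) + Finsupp.single 1 (c v u))
    + Finsupp.single 1 (Finsupp.single 0 (c v u + s • c u v))

/-- `B` is the λ-bracket of the quadratic conformal superalgebra associated to
`(A, [·,·], ∘)`: it takes the prescribed values on `A ⊗ A` and is extended by
`[f(∂)u_λ h(∂)v] = f(−λ)h(∂+λ)[u_λ v]`. -/
def AssocBracket {A : Type*} [AddCommGroup A] [Module ℂ A]
    (gr : ZMod 2 → Submodule ℂ A) (br c : A →ₗ[ℂ] A →ₗ[ℂ] A)
    (B : (ℕ →₀ A) →ₗ[ℂ] (ℕ →₀ A) →ₗ[ℂ] (ℕ →₀ (ℕ →₀ A))) : Prop :=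
  ∀ (p q : ℕ) (i j : ZMod 2), ∀ u ∈ gr i, ∀ v ∈ gr j,
    B (Finsupp.single p u) (Finsupp.single q v)
      = ((-1 : ℂ) ^ p) • ((⇑(lmulV (M := ℕ →₀ A)))^[p]
          ((fun x => dVmap (dR (A := A)) x + lmulV x)^[q]
            (genBr br c (sg i j) u v)))

section Cocycle

variable {M : Type*} [AddCommGroup M] [Module ℂ M]

/-- A 2-cocycle `f_λ : M × M → ℂ[λ]` on a Hom-Lie conformal superalgebra
`(M, grM, dM, B, αM)`.  The cocycle identity
`f_{λ+μ}([u_λ v], α(w)) = f_λ(α(u), [v_μ w]) − (−1)^{|u||v|} f_μ(α(v), [u_λ w])`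
is stated in `ℂ[λ,μ] = MvPolynomial (Fin 2) ℂ`, where `λ = X 0` and `μ = X 1`. -/
def IsCocycle (grM : ZMod 2 → Submodule ℂ M) (dM : M →ₗ[ℂ] M)
    (B : M →ₗ[ℂ] M →ₗ[ℂ] (ℕ →₀ M)) (αM : M →ₗ[ℂ] M)
    (cf : M →ₗ[ℂ] M →ₗ[ℂ] Polynomial ℂ) : Prop :=
  -- skew-symmetry `f_λ(u,v) = −(−1)^{|u||v|} f_{−λ}(v,u)` (note `∂ 𝔠 = 0`)
  (∀ (i j : ZMod 2), ∀ u ∈ grM i, ∀ v ∈ grM j,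
    cf u v = -(sg i j • (cf v u).comp (-Polynomial.X))) ∧
  -- conformal sesquilinearity `f_λ(∂u, v) = −λ f_λ(u,v) = −f_λ(u, ∂v)`
  (∀ u v : M, cf (dM u) v = -(Polynomial.X * cf u v)) ∧
  (∀ u v : M, cf u (dM v) = Polynomial.X * cf u v) ∧
  -- the cocycle identity
  (∀ (i j k : ZMod 2), ∀ u ∈ grM i, ∀ v ∈ grM j, ∀ w ∈ grM k,
    ((B u v).sum fun n r => (MvPolynomial.X 0 : MvPolynomial (Fin 2) ℂ) ^ n
        * Polynomial.aeval
            (MvPolynomial.X 0 + MvPolynomial.X 1 : MvPolynomial (Fin 2) ℂ)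
            (cf r (αM w)))
    = ((B v w).sum fun m s => (MvPolynomial.X 1 : MvPolynomial (Fin 2) ℂ) ^ m
        * Polynomial.aeval (MvPolynomial.X 0 : MvPolynomial (Fin 2) ℂ)
            (cf (αM u) s))
      - sg i j • ((B u w).sum fun n s =>
          (MvPolynomial.X 0 : MvPolynomial (Fin 2) ℂ) ^ n
            * Polynomial.aeval (MvPolynomial.X 1 : MvPolynomial (Fin 2) ℂ)
                (cf (αM v) s)))

end Cocycle

/-! Restricted to generators `u, v, w ∈ A`, and after trading `∂` for `−λ−μ` or `μ` by conformal
sesquilinearity, the cocycle identity becomes an identity in `ℂ[λ, μ]` between terms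
`a(λ+μ)`, `e(λ)`, `k(μ)` multiplied by `1`, `λ` or `μ`, where `a, e, k, …` are values of
`f_λ` on `A × A`. Relations (iv), (iii), (i) are its coefficients of `1`, `λ`, `λ²` at `μ = 0`;
relation (ii) is its `λμ` coefficient, i.e. the `λ²` coefficient on the diagonal `μ = λ` minus
those on the two axes. -/

open Polynomial

theorem coeff_eq_of_eq_sum_C_mul_X_pow {R : Type*} [Semiring R] {p : R[X]} {n : ℕ} {a : ℕ → R}
    (hp : p = ∑ i ∈ Finset.range (n + 1), C (a i) * X ^ i) (ha : ∀ i, n < i → a i = 0) (i : ℕ) :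
    p.coeff i = a i := by
  rw [hp, finsetSum_coeff]
  simp only [coeff_C_mul_X_pow, Finset.sum_ite_eq, Finset.mem_range]
  split_ifs with hi
  · rfl
  · exact (ha i (by omega)).symm

theorem coeff_relations_of_aeval_eq {R : Type*} [CommRing R] {a b d e g h k l m : R[X]} {s : R}
    (H : ∀ x y : R[X], aeval (x + y) a - y * aeval (x + y) b + s • (x * aeval (x + y) d)
      = aeval x e + x * aeval x g + y * aeval x h
        - s • (aeval y k + y * aeval y l + x * aeval y m)) :
    a.coeff 2 + s * d.coeff 1 = e.coeff 2 + g.coeff 1 ∧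
    2 * a.coeff 2 - b.coeff 1 + s * d.coeff 1 = h.coeff 1 - s * m.coeff 1 ∧
    a.coeff 1 + s * d.coeff 0 = e.coeff 1 + g.coeff 0 - s * m.coeff 0 ∧
    a.coeff 0 = e.coeff 0 - s * k.coeff 0 := by
  have hxaxis := H X 0
  have hyaxis := H 0 X
  have hdiag := H X X
  rw [← two_mul, ← map_ofNat C 2] at hdiag
  simp only [add_zero, zero_add, ← coeff_zero_eq_aeval_zero', ← comp_eq_aeval,
    zero_mul, sub_zero] at hxaxis hyaxis hdiag
  have hx₂ : a.coeff 2 + s * d.coeff 1 = e.coeff 2 + g.coeff 1 := by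
    simpa using congrArg (coeff · 2) hxaxis
  have hy₂ : a.coeff 2 - b.coeff 1 = -(s * l.coeff 1) + -(s * k.coeff 2) := by
    simpa using congrArg (coeff · 2) hyaxis
  have hdiag₂ : a.coeff 2 * 2 ^ 2 - b.coeff 1 * 2 + s * (d.coeff 1 * 2)
      = e.coeff 2 + g.coeff 1 + h.coeff 1 - (s * k.coeff 2 + s * l.coeff 1 + s * m.coeff 1) := by
    simpa using congrArg (coeff · 2) hdiag
  refine ⟨hx₂, by linear_combination hdiag₂ - hx₂ - hy₂, ?_, ?_⟩
  · simpa using congrArg (coeff · 1) hxaxis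
  · simpa using congrArg (coeff · 0) hxaxis

section
variable {A : Type*} [AddCommGroup A] [Module ℂ A]

theorem dR_single (k : ℕ) (x : A) : dR (Finsupp.single k x) = Finsupp.single (k + 1) x := by
  simp [dR, Finsupp.mapDomain_single]

theorem single_mem_grFinsupp {gr : ZMod 2 → Submodule ℂ A} {i : ZMod 2} {x : A} (hx : x ∈ gr i)
    (k : ℕ) : Finsupp.single k x ∈ grFinsupp ℕ gr i := by
  intro s
  rw [Finsupp.single_apply]
  split_ifs
  exacts [hx, zero_mem _]

theorem AssocBracket.single_zero {gr : ZMod 2 → Submodule ℂ A} {br c : A →ₗ[ℂ] A →ₗ[ℂ] A}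
    {B : (ℕ →₀ A) →ₗ[ℂ] (ℕ →₀ A) →ₗ[ℂ] (ℕ →₀ (ℕ →₀ A))} (hB : AssocBracket gr br c B)
    {i j : ZMod 2} {u v : A} (hu : u ∈ gr i) (hv : v ∈ gr j) :
    B (Finsupp.single 0 u) (Finsupp.single 0 v) = genBr br c (sg i j) u v := by
  simpa using hB 0 0 i j u hu v hv

theorem genBr_sum {M : Type*} [AddCommMonoid M] (br c : A →ₗ[ℂ] A →ₗ[ℂ] A) (s : ℂ) (u v : A)
    {F : ℕ → (ℕ →₀ A) → M} (hF₀ : ∀ n, F n 0 = 0)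
    (hF : ∀ n r r', F n (r + r') = F n r + F n r') :
    (genBr br c s u v).sum F
      = F 0 (Finsupp.single 0 (br v u)) + F 0 (Finsupp.single 1 (c v u))
        + F 1 (Finsupp.single 0 (c v u + s • c u v)) := by
  rw [genBr, Finsupp.sum_add_index' hF₀ hF, Finsupp.sum_single_index (hF₀ 0),
    Finsupp.sum_single_index (hF₀ 1), hF]

def restrictToA (cf : (ℕ →₀ A) →ₗ[ℂ] (ℕ →₀ A) →ₗ[ℂ] ℂ[X]) : A →ₗ[ℂ] A →ₗ[ℂ] ℂ[X] :=
  cf.compl₁₂ (Finsupp.lsingle 0) (Finsupp.lsingle 0)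

variable {gr : ZMod 2 → Submodule ℂ (ℕ →₀ A)}
  {B : (ℕ →₀ A) →ₗ[ℂ] (ℕ →₀ A) →ₗ[ℂ] (ℕ →₀ (ℕ →₀ A))}
  {αR : (ℕ →₀ A) →ₗ[ℂ] (ℕ →₀ A)} {cf : (ℕ →₀ A) →ₗ[ℂ] (ℕ →₀ A) →ₗ[ℂ] ℂ[X]}

theorem IsCocycle.apply_single_one_left (hcoc : IsCocycle gr dR B αR cf) (x : A)
    (Y : ℕ →₀ A) : cf (Finsupp.single 1 x) Y = -(X * cf (Finsupp.single 0 x) Y) := by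
  rw [← dR_single, hcoc.2.1]

theorem IsCocycle.apply_single_one_right (hcoc : IsCocycle gr dR B αR cf) (Y : ℕ →₀ A)
    (y : A) : cf Y (Finsupp.single 1 y) = X * cf Y (Finsupp.single 0 y) := by
  rw [← dR_single, hcoc.2.2.1]

end

theorem IsCocycle.aeval_restrictToA {A : Type*} [AddCommGroup A] [Module ℂ A]
    {gr : ZMod 2 → Submodule ℂ A} {br c : A →ₗ[ℂ] A →ₗ[ℂ] A} {α : A →ₗ[ℂ] A}
    {B : (ℕ →₀ A) →ₗ[ℂ] (ℕ →₀ A) →ₗ[ℂ] (ℕ →₀ (ℕ →₀ A))}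
    {cf : (ℕ →₀ A) →ₗ[ℂ] (ℕ →₀ A) →ₗ[ℂ] ℂ[X]} (hB : AssocBracket gr br c B)
    (hcoc : IsCocycle (grFinsupp ℕ gr) dR B (Finsupp.mapRange.linearMap α) cf)
    {p q r : ZMod 2} {u v w : A} (hu : u ∈ gr p) (hv : v ∈ gr q) (hw : w ∈ gr r)
    (x y : ℂ[X]) :
    aeval (x + y) (restrictToA cf (br v u) (α w))
        - y * aeval (x + y) (restrictToA cf (c v u) (α w))
        + sg p q • (x * aeval (x + y) (restrictToA cf (c u v) (α w)))
      = aeval x (restrictToA cf (α u) (br w v)) + x * aeval x (restrictToA cf (α u) (c w v))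
          + y * aeval x (restrictToA cf (α u) (c w v + sg q r • c v w))
        - sg p q • (aeval y (restrictToA cf (α v) (br w u))
          + y * aeval y (restrictToA cf (α v) (c w u))
          + x * aeval y (restrictToA cf (α v) (c w u + sg p r • c u w))) := by
  have J := hcoc.2.2.2 p q r _ (single_mem_grFinsupp hu 0) _ (single_mem_grFinsupp hv 0) _
    (single_mem_grFinsupp hw 0)
  rw [hB.single_zero hu hv, hB.single_zero hv hw, hB.single_zero hu hw] at J
  simp only [Finsupp.mapRange.linearMap_apply, Finsupp.mapRange_single] at J
  rw [genBr_sum _ _ _ _ _ (by simp) (by simp [mul_add]),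
    genBr_sum _ _ _ _ _ (by simp) (by simp [mul_add]),
    genBr_sum _ _ _ _ _ (by simp) (by simp [mul_add])] at J
  have J' := congrArg (MvPolynomial.aeval ![x, y]) J
  simp only [hcoc.apply_single_one_left, hcoc.apply_single_one_right, map_add, map_sub, map_mul,
    map_neg, map_smul, map_pow, ← aeval_algHom_apply, MvPolynomial.aeval_X, aeval_X] at J'
  simp only [restrictToA, LinearMap.compl₁₂_apply, Finsupp.lsingle_apply]
  simp only [Matrix.cons_val_zero, Matrix.cons_val_one, pow_zero, pow_one, one_mul,
    Finsupp.single_add, ← Finsupp.smul_single, map_add, map_smul, LinearMap.add_apply,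
    LinearMap.smul_apply] at J' ⊢
  simp only [smul_eq_C_mul] at J' ⊢
  linear_combination J'

theorem cocycle_coeff_relations_low_general
    {A : Type*} [AddCommGroup A] [Module ℂ A]
    (gr : ZMod 2 → Submodule ℂ A)
    (br c : A →ₗ[ℂ] A →ₗ[ℂ] A) (α : A →ₗ[ℂ] A)
    (B : (ℕ →₀ A) →ₗ[ℂ] (ℕ →₀ A) →ₗ[ℂ] (ℕ →₀ (ℕ →₀ A)))
    (hB : AssocBracket gr br c B)
    (cf : (ℕ →₀ A) →ₗ[ℂ] (ℕ →₀ A) →ₗ[ℂ] Polynomial ℂ)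
    (hcoc : IsCocycle (grFinsupp ℕ gr) dR B (Finsupp.mapRange.linearMap α) cf)
    (n : ℕ) (f : ℕ → (A →ₗ[ℂ] A →ₗ[ℂ] ℂ))
    (hres : ∀ u v : A, cf (Finsupp.single 0 u) (Finsupp.single 0 v)
      = ∑ i ∈ Finset.range (n + 1), Polynomial.C (f i u v) * Polynomial.X ^ i)
    (hhigh : ∀ i : ℕ, n < i → f i = 0) :
    ∀ (p q r : ZMod 2), ∀ u ∈ gr p, ∀ v ∈ gr q, ∀ w ∈ gr r,
      (f 2 (br v u) (α w) + sg p q * f 1 (c u v) (α w)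
        = f 2 (α u) (br w v) + f 1 (α u) (c w v)) ∧
      (f 1 (α u) (c w v + sg q r • c v w) - sg p q * f 1 (α v) (c w u + sg p r • c u w)
        = 2 * f 2 (br v u) (α w) - f 1 (c v u) (α w) + sg p q * f 1 (c u v) (α w)) ∧
      (f 1 (α u) (br w v) + f 0 (α u) (c w v)
          - sg p q * f 0 (α v) (c w u + sg p r • c u w)
        = f 1 (br v u) (α w) + sg p q * f 0 (c u v) (α w)) ∧
      (f 0 (α u) (br w v) - sg p q * f 0 (α v) (br w u) = f 0 (br v u) (α w)) := by
  intro p q r u hu v hv w hw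
  have hcoeff (i : ℕ) (x y : A) : (restrictToA cf x y).coeff i = f i x y :=
    coeff_eq_of_eq_sum_C_mul_X_pow (hres x y) (fun j hj => by rw [hhigh j hj]; rfl) i
  obtain ⟨h₂, h₁₁, h₁, h₀⟩ := coeff_relations_of_aeval_eq (hcoc.aeval_restrictToA hB hu hv hw)
  simp only [hcoeff] at h₂ h₁₁ h₁ h₀
  exact ⟨h₂, h₁₁.symm, h₁.symm, h₀.symm⟩

/-- Let `f_λ` be a 2-cocycle on the quadratic Hom-Lie conformal
superalgebra associated to a super Hom-Gel'fand-Dorfman bialgebra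
`(A, [·,·], ∘, α)`, with `f_λ(u,v) = ∑_{i=0}^{n} λ^i f_i(u,v)` on `A × A`, `f_n ≠ 0`,
`n ≤ 3` (and `f_i = 0` for `i > n`).  Then for all homogeneous `u, v, w ∈ A`:
(i) `f₂([v,u],α(w)) + (−1)^{|u||v|} f₁(u∘v,α(w)) = f₂(α(u),[w,v]) + f₁(α(u),w∘v)`;
(ii) `f₁(α(u), w∘v + (−1)^{|v||w|} v∘w) − (−1)^{|u||v|} f₁(α(v), w∘u + (−1)^{|u||w|} u∘w)
     = 2f₂([v,u],α(w)) − f₁(v∘u,α(w)) + (−1)^{|u||v|} f₁(u∘v,α(w))`;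
(iii) `f₁(α(u),[w,v]) + f₀(α(u),w∘v) − (−1)^{|u||v|} f₀(α(v), w∘u + (−1)^{|u||w|} u∘w)
     = f₁([v,u],α(w)) + (−1)^{|u||v|} f₀(u∘v,α(w))`;
(iv) `f₀(α(u),[w,v]) − (−1)^{|u||v|} f₀(α(v),[w,u]) = f₀([v,u],α(w))`. -/
theorem cocycle_coeff_relations_low
    {A : Type*} [AddCommGroup A] [Module ℂ A]
    (gr : ZMod 2 → Submodule ℂ A) (hgr : IsSupergrading gr)
    (br c : A →ₗ[ℂ] A →ₗ[ℂ] A) (α : A →ₗ[ℂ] A)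
    (hGD : SuperHomGD gr br c α)
    (B : (ℕ →₀ A) →ₗ[ℂ] (ℕ →₀ A) →ₗ[ℂ] (ℕ →₀ (ℕ →₀ A)))
    (hB : AssocBracket gr br c B)
    (cf : (ℕ →₀ A) →ₗ[ℂ] (ℕ →₀ A) →ₗ[ℂ] Polynomial ℂ)
    (hcoc : IsCocycle (grFinsupp ℕ gr) dR B (Finsupp.mapRange.linearMap α) cf)
    (n : ℕ) (f : ℕ → (A →ₗ[ℂ] A →ₗ[ℂ] ℂ))
    (hres : ∀ u v : A, cf (Finsupp.single 0 u) (Finsupp.single 0 v)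
      = ∑ i ∈ Finset.range (n + 1), Polynomial.C (f i u v) * Polynomial.X ^ i)
    (hfn : f n ≠ 0) (hn : n ≤ 3) (hhigh : ∀ i : ℕ, n < i → f i = 0) :
    ∀ (p q r : ZMod 2), ∀ u ∈ gr p, ∀ v ∈ gr q, ∀ w ∈ gr r,
      (f 2 (br v u) (α w) + sg p q * f 1 (c u v) (α w)
        = f 2 (α u) (br w v) + f 1 (α u) (c w v)) ∧
      (f 1 (α u) (c w v + sg q r • c v w) - sg p q * f 1 (α v) (c w u + sg p r • c u w)
        = 2 * f 2 (br v u) (α w) - f 1 (c v u) (α w) + sg p q * f 1 (c u v) (α w)) ∧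
      (f 1 (α u) (br w v) + f 0 (α u) (c w v)
          - sg p q * f 0 (α v) (c w u + sg p r • c u w)
        = f 1 (br v u) (α w) + sg p q * f 0 (c u v) (α w)) ∧
      (f 0 (α u) (br w v) - sg p q * f 0 (α v) (br w u) = f 0 (br v u) (α w)) :=
  cocycle_coeff_relations_low_general gr br c α B hB cf hcoc n f hres hhigh

end
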